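/- arXiv:math/0402454 — 6 statements merged into one kernel-verified Lean document; each statement's English description precedes it below -/
import Mathlib

section
/- Let λ ∈ ℂ with λ ≠ 0 and let a, b, c, p ∈ ℂ with c ≠ 0. Then the cubic forms F_λ and G_λ vanish identically on the plane W(a,b,c,p) (equivalently, the line in ℙ⁵ parametrized by (at+s : at−s : bt : ct+ps : ct−ps : t) lies on the threefold X_λ) if and only if λp² = −2a, λ²b = 4ac, 12ca³ = (2c³+1)λ, and 64c⁶ − (16λ⁶ − 32)c³ + λ⁶ = 0. -/
noncomputable section

/-- The first cubic form defining the (3,3) pencil `X_λ`. -/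
def Fcubic (l : ℂ) (x : Fin 6 → ℂ) : ℂ :=
  x 0 ^ 3 + x 1 ^ 3 + x 2 ^ 3 - 3 * l * x 3 * x 4 * x 5

/-- The second cubic form defining the (3,3) pencil `X_λ`. -/
def Gcubic (l : ℂ) (x : Fin 6 → ℂ) : ℂ :=
  x 3 ^ 3 + x 4 ^ 3 + x 5 ^ 3 - 3 * l * x 0 * x 1 * x 2

/-- The plane `W(a,b,c,p) ⊆ ℂ⁶`, spanned by `(1,−1,0,p,−p,0)` and `(a,a,b,c,c,1)`,
i.e. the affine cone of the line `(at+s : at−s : bt : ct+ps : ct−ps : t)` in `ℙ⁵`. -/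
def linePlane (a b c p : ℂ) : Submodule ℂ (Fin 6 → ℂ) :=
  Submodule.span ℂ {![1, -1, 0, p, -p, 0], ![a, a, b, c, c, 1]}

theorem stmt_0 (l : ℂ) (hl : l ≠ 0) (a b c p : ℂ) (hc : c ≠ 0) :
    (∀ x ∈ linePlane a b c p, Fcubic l x = 0 ∧ Gcubic l x = 0) ↔
      (l * p ^ 2 = -2 * a ∧ l ^ 2 * b = 4 * a * c ∧
        12 * c * a ^ 3 = (2 * c ^ 3 + 1) * l ∧
        64 * c ^ 6 - (16 * l ^ 6 - 32) * c ^ 3 + l ^ 6 = 0) := by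
  constructor
  · intro h
    have hu : (![1, -1, 0, p, -p, 0] : Fin 6 → ℂ) ∈ linePlane a b c p :=
      Submodule.subset_span (Set.mem_insert _ _)
    have hv : (![a, a, b, c, c, 1] : Fin 6 → ℂ) ∈ linePlane a b c p :=
      Submodule.subset_span (Set.mem_insert_of_mem _ rfl)
    have e5u : (![1, -1, 0, p, -p, 0] : Fin 6 → ℂ) 5 = 0 := rfl
    have e5v : (![a, a, b, c, c, 1] : Fin 6 → ℂ) 5 = 1 := rfl
    have hw := h _ (add_mem hu hv)
    have hvv := h _ hv
    have hFv := hvv.1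
    have hGv := hvv.2
    have hFw := hw.1
    have hGw := hw.2
    simp [Fcubic, e5u, e5v] at hFv hFw
    simp [Gcubic, e5u, e5v] at hGv hGw
    -- hFv : a^3 + a^3 + b^3 - 3*l*c*c*1 = 0 etc (forms to inspect)
    have hE1 : l * p ^ 2 = -2 * a := by linear_combination (hFw - hFv) / 3
    have hE2 : 2 * a ^ 3 + b ^ 3 = 3 * l * c ^ 2 := by linear_combination hFv
    have hE3 : l * b = -2 * c * p ^ 2 := by linear_combination (hGw - hGv) / 3
    have hE4 : 2 * c ^ 3 + 1 = 3 * l * a ^ 2 * b := by linear_combination hGv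
    refine ⟨hE1, ?_, ?_, ?_⟩
    · linear_combination l * hE3 - 2 * c * hE1
    · have hR2 : l ^ 2 * b = 4 * a * c := by linear_combination l * hE3 - 2 * c * hE1
      linear_combination -3 * a ^ 2 * hR2 - l * hE4
    · have hR2 : l ^ 2 * b = 4 * a * c := by linear_combination l * hE3 - 2 * c * hE1
      have hR3 : 12 * c * a ^ 3 = (2 * c ^ 3 + 1) * l := by
        linear_combination -3 * a ^ 2 * hR2 - l * hE4
      have h4 : l * (64 * c ^ 6 - (16 * l ^ 6 - 32) * c ^ 3 + l ^ 6) = 0 := by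
        linear_combination 6 * c * l ^ 6 * hE2
          - 6 * c * (b ^ 2 * l ^ 4 + 4 * a * b * c * l ^ 2 + 16 * a ^ 2 * c ^ 2) * hR2
          - (l ^ 6 + 32 * c ^ 3) * hR3
      exact (mul_eq_zero.mp h4).resolve_left hl
  · rintro ⟨hR1, hR2, hR3, hR4⟩
    have hE1 : l * p ^ 2 = -2 * a := hR1
    have hE3 : l * b = -2 * c * p ^ 2 := by
      have h : l * (l * b + 2 * c * p ^ 2) = 0 := by linear_combination hR2 + 2 * c * hR1
      have := (mul_eq_zero.mp h).resolve_left hl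
      linear_combination this
    have hE4 : 2 * c ^ 3 + 1 = 3 * l * a ^ 2 * b := by
      have h : l * (2 * c ^ 3 + 1 - 3 * l * a ^ 2 * b) = 0 := by
        linear_combination -hR3 - 3 * a ^ 2 * hR2
      have := (mul_eq_zero.mp h).resolve_left hl
      linear_combination this
    have hE2 : 2 * a ^ 3 + b ^ 3 = 3 * l * c ^ 2 := by
      have h : c * l ^ 6 * (2 * a ^ 3 + b ^ 3 - 3 * l * c ^ 2) = 0 := by
        linear_combination (l / 6) * hR4
          + c * (b ^ 2 * l ^ 4 + 4 * a * b * c * l ^ 2 + 16 * a ^ 2 * c ^ 2) * hR2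
          + ((l ^ 6 + 32 * c ^ 3) / 6) * hR3
      have hne : c * l ^ 6 ≠ 0 := mul_ne_zero hc (pow_ne_zero _ hl)
      have := (mul_eq_zero.mp h).resolve_left hne
      linear_combination this
    have e5u : (![1, -1, 0, p, -p, 0] : Fin 6 → ℂ) 5 = 0 := rfl
    have e5v : (![a, a, b, c, c, 1] : Fin 6 → ℂ) 5 = 1 := rfl
    intro x hx
    rw [linePlane, Submodule.mem_span_pair] at hx
    obtain ⟨s, t, rfl⟩ := hx
    constructor
    · show Fcubic l _ = 0
      simp only [Fcubic, Pi.add_apply, Pi.smul_apply, smul_eq_mul,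
        Matrix.cons_val_zero, Matrix.cons_val_one, Matrix.head_cons,
        Matrix.cons_val_two, Matrix.tail_cons, Matrix.cons_val_three,
        Matrix.cons_val_four, Matrix.cons_val_fin_one, e5u, e5v]
      linear_combination t ^ 3 * hE2 + 3 * t * s ^ 2 * hE1
    · show Gcubic l _ = 0
      simp only [Gcubic, Pi.add_apply, Pi.smul_apply, smul_eq_mul,
        Matrix.cons_val_zero, Matrix.cons_val_one, Matrix.head_cons,
        Matrix.cons_val_two, Matrix.tail_cons, Matrix.cons_val_three,
        Matrix.cons_val_four, Matrix.cons_val_fin_one, e5u, e5v]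
      linear_combination t ^ 3 * hE4 + 3 * t * s ^ 2 * hE3
end
end

section
/- There exists a finite set S ⊂ ℂ containing 0 such that for every λ ∉ S there are exactly 36 quadruples (a,b,c,p) ∈ ℂ⁴ satisfying λp² = −2a, λ²b = 4ac, 12ca³ = (2c³+1)λ, and 64c⁶ − (16λ⁶ − 32)c³ + λ⁶ = 0, and the corresponding 36 planes W(a,b,c,p) are pairwise distinct 2-dimensional subspaces of ℂ⁶, each of which is a line on X_λ. -/
noncomputable section

/-- The system of equations characterizing the 36 lines of Lemma 2.3. -/
def lineEqs (l a b c p : ℂ) : Prop :=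
  l * p ^ 2 = -2 * a ∧ l ^ 2 * b = 4 * a * c ∧
    12 * c * a ^ 3 = (2 * c ^ 3 + 1) * l ∧
    64 * c ^ 6 - (16 * l ^ 6 - 32) * c ^ 3 + l ^ 6 = 0

/-!
Since `λ ≠ 0`, the equations force `a = -λp²/2` and `b = -2cp²/λ`, so a solution is determined
by `(c, p)`. The last equation is a quadratic in `c³` with discriminant `256(λ⁶-1)(λ⁶-4)` and
nonzero constant term, so it has six distinct roots `c`; for each of them `p` ranges over the six
sixth roots of the nonzero number `-2(2c³+1)/(3cλ²)`, giving 36 solutions. On `W(a,b,c,p)` the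
two cubics restrict to `t³(…) + 3s²t(…)`, and the four coefficients vanish by the equations.
The plane determines `(a,b,c,p)`: its vectors with last coordinate `0` are the multiples of
`(1,-1,0,p,-p,0)`, and `(a,a,b,c,c,1)` is its only vector with equal first two coordinates and
last coordinate `1`.
-/

open Polynomial Finset

section RootCounting

variable {K : Type*} [Field K] [IsAlgClosed K] [CharZero K]

theorem card_nthRootsFinset_of_ne_zero {n : ℕ} (hn : n ≠ 0) {a : K} (ha : a ≠ 0) :
    #(nthRootsFinset n a) = n := by
  have : NeZero (n : K) := ⟨Nat.cast_ne_zero.mpr hn⟩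
  obtain ⟨ζ, hζ⟩ := HasEnoughRootsOfUnity.exists_primitiveRoot K n
  classical
  rw [nthRootsFinset_def, Multiset.toFinset_card_of_nodup (hζ.nthRoots_nodup ha),
    hζ.card_nthRoots, if_pos (IsAlgClosed.exists_pow_nat_eq a (Nat.pos_of_ne_zero hn))]

theorem exists_finset_quadratic_pow_eq_zero {n : ℕ} (hn : n ≠ 0) {a b c : K} (ha : a ≠ 0)
    (hc : c ≠ 0) (hd : discrim a b c ≠ 0) :
    ∃ s : Finset K, #s = 2 * n ∧ ∀ x, x ∈ s ↔ a * (x ^ n * x ^ n) + b * x ^ n + c = 0 := by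
  classical
  obtain ⟨δ, hδ⟩ := IsAlgClosed.exists_eq_mul_self (discrim a b c)
  have hroots := quadratic_eq_zero_iff ha hδ
  set z₁ := (-b + δ) / (2 * a)
  set z₂ := (-b - δ) / (2 * a)
  have hz : ∀ z, z = z₁ ∨ z = z₂ → z ≠ 0 := fun z hz h0 =>
    hc (by simpa [h0] using (hroots z).mpr hz)
  have hz₁₂ : z₁ ≠ z₂ := by
    intro h
    have hδ0 : δ = 0 := by
      rw [div_left_inj' (mul_ne_zero two_ne_zero ha)] at h
      linear_combination h / 2
    exact hd (by rw [hδ, hδ0, mul_zero])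
  have hn' : 0 < n := Nat.pos_of_ne_zero hn
  refine ⟨nthRootsFinset n z₁ ∪ nthRootsFinset n z₂, ?_, fun x => ?_⟩
  · rw [card_union_of_disjoint, card_nthRootsFinset_of_ne_zero hn (hz _ (.inl rfl)),
      card_nthRootsFinset_of_ne_zero hn (hz _ (.inr rfl)), two_mul]
    exact disjoint_left.mpr fun x h₁ h₂ =>
      hz₁₂ (((mem_nthRootsFinset hn' _).mp h₁).symm.trans ((mem_nthRootsFinset hn' _).mp h₂))
  · rw [mem_union, mem_nthRootsFinset hn', mem_nthRootsFinset hn', hroots]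

end RootCounting

section LinePlane

variable {l a b c p : ℂ}

theorem Fcubic_smul_add_smul (s t : ℂ) :
    Fcubic l (s • ![1, -1, 0, p, -p, 0] + t • ![a, a, b, c, c, 1]) =
      t ^ 3 * (2 * a ^ 3 + b ^ 3 - 3 * l * c ^ 2) + 3 * s ^ 2 * t * (2 * a + l * p ^ 2) := by
  simp only [Fcubic, Pi.add_apply, Pi.smul_apply, smul_eq_mul, Matrix.cons_val]
  ring

theorem Gcubic_smul_add_smul (s t : ℂ) :
    Gcubic l (s • ![1, -1, 0, p, -p, 0] + t • ![a, a, b, c, c, 1]) =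
      t ^ 3 * (2 * c ^ 3 + 1 - 3 * l * a ^ 2 * b) + 3 * s ^ 2 * t * (2 * c * p ^ 2 + l * b) := by
  simp only [Gcubic, Pi.add_apply, Pi.smul_apply, smul_eq_mul, Matrix.cons_val]
  ring

theorem cubics_vanish_on_linePlane (h₁ : l * p ^ 2 = -2 * a)
    (h₂ : 2 * a ^ 3 + b ^ 3 = 3 * l * c ^ 2) (h₃ : l * b = -2 * c * p ^ 2)
    (h₄ : 2 * c ^ 3 + 1 = 3 * l * a ^ 2 * b) :
    ∀ x ∈ linePlane a b c p, Fcubic l x = 0 ∧ Gcubic l x = 0 := by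
  intro x hx
  obtain ⟨s, t, rfl⟩ := Submodule.mem_span_pair.mp hx
  rw [Fcubic_smul_add_smul, Gcubic_smul_add_smul]
  exact ⟨by linear_combination t ^ 3 * h₂ + 3 * s ^ 2 * t * h₁,
    by linear_combination t ^ 3 * h₄ + 3 * s ^ 2 * t * h₃⟩

theorem finrank_linePlane : Module.finrank ℂ (linePlane a b c p) = 2 := by
  have hli : LinearIndependent ℂ ![![1, -1, 0, p, -p, 0], ![a, a, b, c, c, 1]] := by
    refine LinearIndependent.pair_iff.mpr fun s t hst => ?_
    have ht : t = 0 := by simpa using congrFun hst 5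
    refine ⟨by simpa [ht] using congrFun hst 0, ht⟩
  have := finrank_span_eq_card hli
  rwa [Matrix.range_cons_cons_empty, Fintype.card_fin] at this

theorem linePlane_injective :
    Function.Injective fun q : ℂ × ℂ × ℂ × ℂ => linePlane q.1 q.2.1 q.2.2.1 q.2.2.2 := by
  rintro ⟨a, b, c, p⟩ ⟨a', b', c', p'⟩ h
  have hmem : ∀ x ∈ ({![1, -1, 0, p', -p', 0], ![a', a', b', c', c', 1]} : Set (Fin 6 → ℂ)),
      x ∈ linePlane a b c p := fun x hx => (congrArg (x ∈ ·) h).mpr (Submodule.subset_span hx)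
  obtain ⟨s, t, hu⟩ := Submodule.mem_span_pair.mp (hmem _ (.inl rfl))
  obtain ⟨s', t', hv⟩ := Submodule.mem_span_pair.mp (hmem _ (.inr rfl))
  have hu₀ : s + t * a = 1 := by simpa using congrFun hu 0
  have hu₃ : s * p + t * c = p' := by simpa using congrFun hu 3
  have hu₅ : t = 0 := by simpa using congrFun hu 5
  have hv₀ : s' + t' * a = a' := by simpa using congrFun hv 0
  have hv₁ : -s' + t' * a = a' := by simpa using congrFun hv 1
  have hv₂ : t' * b = b' := by simpa using congrFun hv 2
  have hv₃ : s' * p + t' * c = c' := by simpa using congrFun hv 3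
  have hv₅ : t' = 1 := by simpa using congrFun hv 5
  subst hu₅ hv₅
  have hs' : s' = 0 := by linear_combination (hv₀ - hv₁) / 2
  simp only [Prod.mk.injEq]
  exact ⟨by linear_combination hv₀ - hs', by linear_combination hv₂,
    by linear_combination hv₃ - p * hs', by linear_combination hu₃ - p * hu₀⟩

end LinePlane

section Solutions

variable {l a b c p : ℂ}

theorem ne_zero_of_sextic_eq_zero (hl : l ≠ 0)
    (h : 64 * c ^ 6 - (16 * l ^ 6 - 32) * c ^ 3 + l ^ 6 = 0) : c ≠ 0 := by
  rintro rfl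
  exact hl (pow_eq_zero_iff (n := 6) (by norm_num) |>.mp (by simpa using h))

theorem two_mul_cube_add_one_ne_zero_of_sextic_eq_zero (hl : l ≠ 0)
    (h : 64 * c ^ 6 - (16 * l ^ 6 - 32) * c ^ 3 + l ^ 6 = 0) : 2 * c ^ 3 + 1 ≠ 0 := by
  intro hc
  have : 9 * l ^ 6 = 0 := by linear_combination h - (32 * c ^ 3 - 8 * l ^ 6) * hc
  exact hl (pow_eq_zero_iff (n := 6) (by norm_num) |>.mp (by simpa using this))

theorem lineEqs_iff (hl : l ≠ 0) :
    lineEqs l a b c p ↔ 64 * c ^ 6 - (16 * l ^ 6 - 32) * c ^ 3 + l ^ 6 = 0 ∧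
      p ^ 6 = -2 * (2 * c ^ 3 + 1) / (3 * c * l ^ 2) ∧
      a = -(l * p ^ 2) / 2 ∧ b = -(2 * c * p ^ 2) / l := by
  constructor
  · rintro ⟨e₁, e₂, e₃, e₄⟩
    have hc := ne_zero_of_sextic_eq_zero hl e₄
    refine ⟨e₄, ?_, by linear_combination e₁ / 2, ?_⟩
    · rw [eq_div_iff (by simp [hc, hl])]
      refine mul_left_cancel₀ hl ?_
      linear_combination -2 * e₃ + 3 * c * (l ^ 2 * p ^ 4 - 2 * a * l * p ^ 2 + 4 * a ^ 2) * e₁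
    · rw [eq_div_iff hl]
      exact mul_left_cancel₀ hl (by linear_combination e₂ + 2 * c * e₁)
  · rintro ⟨e₄, hp, rfl, rfl⟩
    have hc := ne_zero_of_sextic_eq_zero hl e₄
    rw [eq_div_iff (by simp [hc, hl])] at hp
    exact ⟨by ring, by field_simp; ring, by linear_combination (-(l / 2)) * hp, e₄⟩

theorem cubics_vanish_on_linePlane_of_lineEqs (hl : l ≠ 0) (h : lineEqs l a b c p) :
    ∀ x ∈ linePlane a b c p, Fcubic l x = 0 ∧ Gcubic l x = 0 := by
  obtain ⟨e₁, e₂, e₃, e₄⟩ := h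
  have hc := ne_zero_of_sextic_eq_zero hl e₄
  refine cubics_vanish_on_linePlane e₁ ?_ ?_ ?_
  · refine mul_left_cancel₀ (show 6 * c * l ^ 6 ≠ 0 by simp [hc, hl]) ?_
    linear_combination (6 * c * (l ^ 4 * b ^ 2 + 4 * a * c * l ^ 2 * b + 16 * a ^ 2 * c ^ 2)) * e₂
      + (l ^ 6 + 32 * c ^ 3) * e₃ + l * e₄
  · exact mul_left_cancel₀ hl (by linear_combination 2 * c * e₁ + e₂)
  · exact mul_left_cancel₀ hl (by linear_combination -e₃ - 3 * a ^ 2 * e₂)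

theorem setOf_lineEqs_eq_image (hl : l ≠ 0) {C : Finset ℂ}
    (hC : ∀ c, c ∈ C ↔ 64 * c ^ 6 - (16 * l ^ 6 - 32) * c ^ 3 + l ^ 6 = 0) :
    {q : ℂ × ℂ × ℂ × ℂ | lineEqs l q.1 q.2.1 q.2.2.1 q.2.2.2} =
      (fun x : (_ : ℂ) × ℂ => (-(l * x.2 ^ 2) / 2, -(2 * x.1 * x.2 ^ 2) / l, x.1, x.2)) ''
        ↑(C.sigma fun c => nthRootsFinset 6 (-2 * (2 * c ^ 3 + 1) / (3 * c * l ^ 2))) := by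
  ext ⟨a, b, c, p⟩
  simp only [Set.mem_ofPred_eq, lineEqs_iff hl, Set.mem_image, coe_sigma, Set.mem_sigma_iff,
    mem_coe, hC, mem_nthRootsFinset (show 0 < 6 by norm_num)]
  constructor
  · rintro ⟨hc, hp, rfl, rfl⟩
    exact ⟨⟨c, p⟩, ⟨hc, hp⟩, rfl⟩
  · rintro ⟨⟨c, p⟩, ⟨hc, hp⟩, h⟩
    simp only [Prod.mk.injEq] at h
    obtain ⟨rfl, rfl, rfl, rfl⟩ := h
    exact ⟨hc, hp, rfl, rfl⟩

theorem ncard_setOf_lineEqs (hl₀ : l ≠ 0) (hl₁ : l ^ 6 ≠ 1) (hl₄ : l ^ 6 ≠ 4) :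
    {q : ℂ × ℂ × ℂ × ℂ | lineEqs l q.1 q.2.1 q.2.2.1 q.2.2.2}.ncard = 36 := by
  have hdisc : discrim 64 (-(16 * l ^ 6 - 32)) (l ^ 6) = 256 * ((l ^ 6 - 1) * (l ^ 6 - 4)) := by
    rw [discrim]; ring
  obtain ⟨C, hC_card, hC⟩ := exists_finset_quadratic_pow_eq_zero three_ne_zero (by norm_num)
    (pow_ne_zero 6 hl₀) (hdisc ▸ mul_ne_zero (by norm_num)
      (mul_ne_zero (sub_ne_zero.mpr hl₁) (sub_ne_zero.mpr hl₄)))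
  have hsextic : ∀ c, c ∈ C ↔ 64 * c ^ 6 - (16 * l ^ 6 - 32) * c ^ 3 + l ^ 6 = 0 := fun c => by
    rw [hC]; ring_nf
  have hcard_fiber : ∀ c ∈ C,
      #(nthRootsFinset 6 (-2 * (2 * c ^ 3 + 1) / (3 * c * l ^ 2))) = 6 := fun c hc => by
    rw [hsextic] at hc
    refine card_nthRootsFinset_of_ne_zero (by norm_num) (div_ne_zero ?_ ?_)
    · exact mul_ne_zero (by norm_num) (two_mul_cube_add_one_ne_zero_of_sextic_eq_zero hl₀ hc)
    · simp [ne_zero_of_sextic_eq_zero hl₀ hc, hl₀]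
  rw [setOf_lineEqs_eq_image hl₀ hsextic, Set.ncard_image_of_injective _ ?inj,
    Set.ncard_coe_finset, card_sigma, sum_congr rfl hcard_fiber, sum_const, hC_card]
  · rfl
  · rintro ⟨c, p⟩ ⟨c', p'⟩ h
    simp only [Prod.mk.injEq] at h
    obtain ⟨-, -, rfl, rfl⟩ := h
    rfl

end Solutions

theorem stmt_1 :
    ∃ S : Finset ℂ, (0 : ℂ) ∈ S ∧ ∀ l : ℂ, l ∉ S →
      ({q : ℂ × ℂ × ℂ × ℂ | lineEqs l q.1 q.2.1 q.2.2.1 q.2.2.2}.ncard = 36 ∧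
        Set.InjOn (fun q : ℂ × ℂ × ℂ × ℂ => linePlane q.1 q.2.1 q.2.2.1 q.2.2.2)
          {q : ℂ × ℂ × ℂ × ℂ | lineEqs l q.1 q.2.1 q.2.2.1 q.2.2.2} ∧
        ∀ q : ℂ × ℂ × ℂ × ℂ, lineEqs l q.1 q.2.1 q.2.2.1 q.2.2.2 →
          Module.finrank ℂ (linePlane q.1 q.2.1 q.2.2.1 q.2.2.2) = 2 ∧
          ∀ x ∈ linePlane q.1 q.2.1 q.2.2.1 q.2.2.2, Fcubic l x = 0 ∧ Gcubic l x = 0) := by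
  refine ⟨insert 0 (nthRootsFinset 6 1 ∪ nthRootsFinset 6 4), mem_insert_self _ _, fun l hl => ?_⟩
  simp only [mem_insert, mem_union, mem_nthRootsFinset (show 0 < 6 by norm_num), not_or] at hl
  obtain ⟨hl₀, hl₁, hl₄⟩ := hl
  exact ⟨ncard_setOf_lineEqs hl₀ hl₁ hl₄, linePlane_injective.injOn,
    fun q hq => ⟨finrank_linePlane, cubics_vanish_on_linePlane_of_lineEqs hl₀ hq⟩⟩
end
end

section
/- Let ζ ∈ ℂ be any primitive 9th root of unity and ω = ζ³. Then the subgroup G of (ℂˣ)⁶ generated by α₁ = (1, ω, ω⁻¹, 1, 1, 1), α₂ = (1, 1, ω, ζ, ζ, ζ⁻²), and α₃ = (1, 1, 1, 1, ω, ω⁻¹) has exactly 81 elements. -/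
noncomputable section

/-- The three generators of the order-81 group `G ≤ (ℂˣ)⁶`, where `ω = ζ³`
for a primitive ninth root of unity `ζ`. -/
def Ggen (z : ℂˣ) : Set (Fin 6 → ℂˣ) :=
  {![1, z ^ 3, (z ^ 3)⁻¹, 1, 1, 1],
    ![1, 1, z ^ 3, z, z, (z ^ 2)⁻¹],
    ![1, 1, 1, 1, z ^ 3, (z ^ 3)⁻¹]}

private lemma pow_mod_eq {G : Type*} [Group G] {g : G} {k : ℕ} (h : g ^ k = 1) (m : ℕ) :
    g ^ (m % k) = g ^ m := by
  conv_rhs => rw [← Nat.div_add_mod m k]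
  rw [pow_add, pow_mul, h, one_pow, one_mul]

private lemma mul_shuffle {G : Type*} [CommMonoid G] (p q r s t u : G) :
    p * s * (q * t) * (r * u) = p * q * r * (s * t * u) := by
  simp only [mul_assoc, mul_comm, mul_left_comm]

theorem stmt_3 (z : ℂˣ) (hz : IsPrimitiveRoot (z : ℂ) 9) :
    Nat.card (Subgroup.closure (Ggen z) : Subgroup (Fin 6 → ℂˣ)) = 81 := by
  have hz9 : z ^ 9 = 1 := by
    ext
    push_cast
    exact hz.pow_eq_one
  have hz18 : z ^ 18 = 1 := by
    rw [show (18 : ℕ) = 9 * 2 from rfl, pow_mul, hz9, one_pow]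
  set a : Fin 6 → ℂˣ := ![1, z ^ 3, (z ^ 3)⁻¹, 1, 1, 1] with ha_def
  set b : Fin 6 → ℂˣ := ![1, 1, z ^ 3, z, z, (z ^ 2)⁻¹] with hb_def
  set c : Fin 6 → ℂˣ := ![1, 1, 1, 1, z ^ 3, (z ^ 3)⁻¹] with hc_def
  have ha : a ^ 3 = 1 := by
    funext i
    fin_cases i
    · show (1 : ℂˣ) ^ 3 = 1; rw [one_pow]
    · show (z ^ 3) ^ 3 = 1; rw [← pow_mul]; exact hz9
    · show ((z ^ 3)⁻¹) ^ 3 = 1; rw [inv_pow, ← pow_mul]; exact inv_eq_one.mpr hz9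
    · show (1 : ℂˣ) ^ 3 = 1; rw [one_pow]
    · show (1 : ℂˣ) ^ 3 = 1; rw [one_pow]
    · show (1 : ℂˣ) ^ 3 = 1; rw [one_pow]
  have hb : b ^ 9 = 1 := by
    funext i
    fin_cases i
    · show (1 : ℂˣ) ^ 9 = 1; rw [one_pow]
    · show (1 : ℂˣ) ^ 9 = 1; rw [one_pow]
    · show (z ^ 3) ^ 9 = 1; rw [← pow_mul, show (3 * 9 : ℕ) = 9 * 3 from rfl, pow_mul, hz9,
        one_pow]
    · show z ^ 9 = 1; exact hz9
    · show z ^ 9 = 1; exact hz9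
    · show ((z ^ 2)⁻¹) ^ 9 = 1; rw [inv_pow, ← pow_mul]; exact inv_eq_one.mpr hz18
  have hc : c ^ 3 = 1 := by
    funext i
    fin_cases i
    · show (1 : ℂˣ) ^ 3 = 1; rw [one_pow]
    · show (1 : ℂˣ) ^ 3 = 1; rw [one_pow]
    · show (1 : ℂˣ) ^ 3 = 1; rw [one_pow]
    · show (1 : ℂˣ) ^ 3 = 1; rw [one_pow]
    · show (z ^ 3) ^ 3 = 1; rw [← pow_mul]; exact hz9
    · show ((z ^ 3)⁻¹) ^ 3 = 1; rw [inv_pow, ← pow_mul]; exact inv_eq_one.mpr hz9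
  set f : ZMod 3 × ZMod 9 × ZMod 3 → (Fin 6 → ℂˣ) :=
    fun x => a ^ x.1.val * b ^ x.2.1.val * c ^ x.2.2.val with hf_def
  have hadd : ∀ x y, f (x + y) = f x * f y := by
    intro x y
    simp only [hf_def]
    rw [Prod.fst_add, Prod.snd_add, Prod.fst_add, Prod.snd_add,
      ZMod.val_add, ZMod.val_add, ZMod.val_add,
      pow_mod_eq ha, pow_mod_eq hb, pow_mod_eq hc, pow_add, pow_add, pow_add]
    exact mul_shuffle _ _ _ _ _ _
  have hf0 : f 0 = 1 := by simp [hf_def]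
  set K : Subgroup (Fin 6 → ℂˣ) :=
    { carrier := Set.range f
      one_mem' := ⟨0, hf0⟩
      mul_mem' := by
        rintro _ _ ⟨x, rfl⟩ ⟨y, rfl⟩
        exact ⟨x + y, hadd x y⟩
      inv_mem' := by
        rintro _ ⟨x, rfl⟩
        refine ⟨-x, ?_⟩
        have : f (-x) * f x = 1 := by rw [← hadd, neg_add_cancel, hf0]
        exact eq_inv_of_mul_eq_one_left this } with hK_def
  have hKeq : Subgroup.closure (Ggen z) = K := by
    apply le_antisymm
    · rw [Subgroup.closure_le]
      intro g hg
      rcases hg with h | h | h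
      · refine ⟨(1, 0, 0), ?_⟩; rw [h, ← ha_def]; simp [hf_def, show ZMod.val (1 : ZMod 3) = 1 from rfl]
      · refine ⟨(0, 1, 0), ?_⟩; rw [h, ← hb_def]; simp [hf_def, show ZMod.val (1 : ZMod 9) = 1 from rfl]
      · refine ⟨(0, 0, 1), ?_⟩; rw [h, ← hc_def]; simp [hf_def, show ZMod.val (1 : ZMod 3) = 1 from rfl]
    · rintro _ ⟨x, rfl⟩
      have hma : a ∈ Subgroup.closure (Ggen z) :=
        Subgroup.subset_closure (by left; rfl)
      have hmb : b ∈ Subgroup.closure (Ggen z) :=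
        Subgroup.subset_closure (by right; left; rfl)
      have hmc : c ∈ Subgroup.closure (Ggen z) :=
        Subgroup.subset_closure (by right; right; rfl)
      exact mul_mem (mul_mem (pow_mem hma _) (pow_mem hmb _)) (pow_mem hmc _)
  have hfi : Function.Injective f := by
    intro x y hxy
    have hcoord : ∀ i, a i ^ x.1.val * b i ^ x.2.1.val * c i ^ x.2.2.val
        = a i ^ y.1.val * b i ^ y.2.1.val * c i ^ y.2.2.val := by
      intro i
      have h := congrFun hxy i
      simpa only [hf_def, Pi.mul_apply, Pi.pow_apply] using h
    have key : ∀ m n : ℕ, m < 9 → n < 9 → (z : ℂˣ) ^ m = z ^ n → m = n := by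
      intro m n hm hn h
      refine hz.pow_inj hm hn ?_
      have := congrArg (Units.val) h
      push_cast at this
      exact this
    have hx1 : x.1.val < 3 := ZMod.val_lt _
    have hy1 : y.1.val < 3 := ZMod.val_lt _
    have hx2 : x.2.1.val < 9 := ZMod.val_lt _
    have hy2 : y.2.1.val < 9 := ZMod.val_lt _
    have hx3 : x.2.2.val < 3 := ZMod.val_lt _
    have hy3 : y.2.2.val < 3 := ZMod.val_lt _
    have ea3 : a 3 = 1 := rfl
    have eb3 : b 3 = z := rfl
    have ec3 : c 3 = 1 := rfl
    have ea1 : a 1 = z ^ 3 := rfl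
    have eb1 : b 1 = 1 := rfl
    have ec1 : c 1 = 1 := rfl
    have ea4 : a 4 = 1 := rfl
    have eb4 : b 4 = z := rfl
    have ec4 : c 4 = z ^ 3 := rfl
    have h3 := hcoord 3
    rw [ea3, eb3, ec3, one_pow, one_pow, one_pow, one_pow, one_mul, one_mul, mul_one,
      mul_one] at h3
    have hb' : x.2.1.val = y.2.1.val := key _ _ hx2 hy2 h3
    have h1 := hcoord 1
    rw [ea1, eb1, ec1, one_pow, one_pow, one_pow, one_pow, mul_one, mul_one, mul_one,
      mul_one, ← pow_mul, ← pow_mul] at h1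
    have ha' : 3 * x.1.val = 3 * y.1.val :=
      key _ _ (by omega) (by omega) h1
    have h4 := hcoord 4
    rw [ea4, eb4, ec4, one_pow, one_pow, one_mul, one_mul, hb', ← pow_mul, ← pow_mul] at h4
    have hc' : 3 * x.2.2.val = 3 * y.2.2.val :=
      key _ _ (by omega) (by omega) (mul_left_cancel h4)
    have e1 : x.1 = y.1 := ZMod.val_injective _ (by omega)
    have e2 : x.2.1 = y.2.1 := ZMod.val_injective _ hb'
    have e3 : x.2.2 = y.2.2 := ZMod.val_injective _ (by omega)
    exact Prod.ext e1 (Prod.ext e2 e3)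
  rw [hKeq]
  have hcard : Nat.card K = Nat.card (Set.range f) := rfl
  rw [hcard, Nat.card_range_of_injective hfi, Nat.card_prod, Nat.card_prod,
    Nat.card_zmod, Nat.card_zmod]
end
end

section
/- There exists a finite set S ⊂ ℂ containing 0 such that for every λ ∉ S and every (a,b,c,p) ∈ ℂ⁴ with c ≠ 0 satisfying λp² = −2a, λ²b = 4ac, 12ca³ = (2c³+1)λ, and 64c⁶ − (16λ⁶ − 32)c³ + λ⁶ = 0, the orbit {g·W(a,b,c,p) : g ∈ G} of the plane W(a,b,c,p) under the componentwise action of G on subspaces of ℂ⁶ has exactly 81 elements; equivalently, no nontrivial element of G maps W(a,b,c,p) to itself. -/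
noncomputable section

/-- The subgroup `G ≤ (ℂˣ)⁶` generated by `α₁, α₂, α₃`, where `ω = ζ³`. -/
def Gsub (z : ℂˣ) : Subgroup (Fin 6 → ℂˣ) :=
  Subgroup.closure
    {![1, z ^ 3, (z ^ 3)⁻¹, 1, 1, 1],
      ![1, 1, z ^ 3, z, z, (z ^ 2)⁻¹],
      ![1, 1, 1, 1, z ^ 3, (z ^ 3)⁻¹]}

/-- The subgroup `H ≤ S₆` generated by all permutations of the indices `{0,1,2}`
and all permutations of the indices `{3,4,5}`. -/
def Hsub : Subgroup (Equiv.Perm (Fin 6)) :=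
  Subgroup.closure
    ({σ : Equiv.Perm (Fin 6) | ∀ i : Fin 6, 3 ≤ (i : ℕ) → σ i = i} ∪
      {σ : Equiv.Perm (Fin 6) | ∀ i : Fin 6, (i : ℕ) < 3 → σ i = i})

/-- Componentwise multiplication by `g ∈ (ℂˣ)⁶` as a linear automorphism-inducing map. -/
def diagMap (g : Fin 6 → ℂˣ) : (Fin 6 → ℂ) →ₗ[ℂ] (Fin 6 → ℂ) :=
  LinearMap.pi fun i => (g i : ℂ) • LinearMap.proj i

/-- Coordinate permutation `x ↦ x ∘ σ` as a linear map. -/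
def permMap (σ : Equiv.Perm (Fin 6)) : (Fin 6 → ℂ) →ₗ[ℂ] (Fin 6 → ℂ) :=
  LinearMap.funLeft ℂ ℂ σ

/-! ### Auxiliary lemmas -/

lemma diagMap_apply (g : Fin 6 → ℂˣ) (x : Fin 6 → ℂ) (i : Fin 6) :
    diagMap g x i = (g i : ℂ) * x i := rfl

lemma diagMap_mul (g h : Fin 6 → ℂˣ) : diagMap (g * h) = (diagMap g).comp (diagMap h) := by
  refine LinearMap.ext fun x => funext fun i => ?_
  simp [diagMap_apply, mul_assoc]

lemma diagMap_one : diagMap (1 : Fin 6 → ℂˣ) = LinearMap.id := by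
  refine LinearMap.ext fun x => funext fun i => ?_
  simp [diagMap_apply]

lemma eval0_one (z : ℂˣ) {g : Fin 6 → ℂˣ} (hg : g ∈ Gsub z) : g 0 = 1 := by
  have hle : Gsub z ≤ (Pi.evalMonoidHom (fun _ : Fin 6 => ℂˣ) 0).ker := by
    rw [Gsub, Subgroup.closure_le]
    rintro x (rfl | rfl | rfl) <;> rfl
  exact hle hg

lemma stab_trivial (z : ℂˣ) {a b c p : ℂ} (ha : a ≠ 0) (hb : b ≠ 0) (hp : p ≠ 0)
    {g : Fin 6 → ℂˣ} (hg : g ∈ Gsub z)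
    (hW : Submodule.map (diagMap g) (linePlane a b c p) = linePlane a b c p) :
    g = 1 := by
  set u : Fin 6 → ℂ := ![1, -1, 0, p, -p, 0] with hu_def
  set v : Fin 6 → ℂ := ![a, a, b, c, c, 1] with hv_def
  have hu : u ∈ linePlane a b c p := Submodule.subset_span (Set.mem_insert _ _)
  have hv : v ∈ linePlane a b c p :=
    Submodule.subset_span (Set.mem_insert_of_mem _ rfl)
  have hDu : diagMap g u ∈ Submodule.span ℂ {u, v} := by
    rw [show Submodule.span ℂ {u, v} = linePlane a b c p from rfl, ← hW]
    exact Submodule.mem_map_of_mem hu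
  have hDv : diagMap g v ∈ Submodule.span ℂ {u, v} := by
    rw [show Submodule.span ℂ {u, v} = linePlane a b c p from rfl, ← hW]
    exact Submodule.mem_map_of_mem hv
  obtain ⟨s, t, hst⟩ := Submodule.mem_span_pair.mp hDu
  obtain ⟨s', t', hst'⟩ := Submodule.mem_span_pair.mp hDv
  have e0 := congrFun hst 0
  have e1 := congrFun hst 1
  have e3 := congrFun hst 3
  have e4 := congrFun hst 4
  have e5 := congrFun hst 5
  have f0 := congrFun hst' 0
  have f1 := congrFun hst' 1
  have f2 := congrFun hst' 2
  have f5 := congrFun hst' 5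
  simp only [Pi.add_apply, Pi.smul_apply, diagMap_apply, smul_eq_mul] at e0 e1 e3 e4 e5 f0 f1 f2 f5
  rw [show u 0 = 1 from rfl, show v 0 = a from rfl] at e0
  rw [show u 1 = -1 from rfl, show v 1 = a from rfl] at e1
  rw [show u 3 = p from rfl, show v 3 = c from rfl] at e3
  rw [show u 4 = -p from rfl, show v 4 = c from rfl] at e4
  rw [show u 5 = 0 from rfl, show v 5 = 1 from rfl] at e5
  rw [show u 0 = 1 from rfl, show v 0 = a from rfl] at f0
  rw [show u 1 = -1 from rfl, show v 1 = a from rfl] at f1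
  rw [show u 2 = 0 from rfl, show v 2 = b from rfl] at f2
  rw [show u 5 = 0 from rfl, show v 5 = 1 from rfl] at f5
  have ht : t = 0 := by linear_combination e5
  have hs : s = (g 0 : ℂ) := by linear_combination e0 - a * ht
  have hg1 : (g 1 : ℂ) = g 0 := by linear_combination e1 + hs - a * ht
  have hg3 : (g 3 : ℂ) = g 0 := by
    have h : (g 3 : ℂ) * p = (g 0 : ℂ) * p := by linear_combination -e3 + p * hs + c * ht
    exact mul_right_cancel₀ hp h
  have hg4 : (g 4 : ℂ) = g 0 := by
    have h : (g 4 : ℂ) * p = (g 0 : ℂ) * p := by linear_combination e4 + p * hs - c * ht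
    exact mul_right_cancel₀ hp h
  have hs' : s' = 0 := by linear_combination (f0 - f1 - a * hg1) / 2
  have ht' : t' = (g 0 : ℂ) := by
    have h : t' * a = (g 0 : ℂ) * a := by linear_combination f0 - hs'
    exact mul_right_cancel₀ ha h
  have hg2 : (g 2 : ℂ) = g 0 := by
    have h : (g 2 : ℂ) * b = (g 0 : ℂ) * b := by linear_combination -f2 + b * ht'
    exact mul_right_cancel₀ hb h
  have hg5 : (g 5 : ℂ) = g 0 := by linear_combination -f5 + ht'
  have hg0 : g 0 = 1 := eval0_one z hg
  have hg0' : (g 0 : ℂ) = 1 := by rw [hg0]; rfl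
  have key : ∀ m : Fin 6, (g m : ℂ) = g 0 := by
    intro m
    fin_cases m
    · rfl
    · exact hg1
    · exact hg2
    · exact hg3
    · exact hg4
    · exact hg5
  funext m
  ext
  rw [key m, hg0']
  rfl

def gen1 (z : ℂˣ) : Fin 6 → ℂˣ := ![1, z ^ 3, (z ^ 3)⁻¹, 1, 1, 1]
def gen2 (z : ℂˣ) : Fin 6 → ℂˣ := ![1, 1, z ^ 3, z, z, (z ^ 2)⁻¹]
def gen3 (z : ℂˣ) : Fin 6 → ℂˣ := ![1, 1, 1, 1, z ^ 3, (z ^ 3)⁻¹]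

lemma Gsub_eq_sup (z : ℂˣ) :
    Gsub z = Subgroup.zpowers (gen1 z) ⊔ (Subgroup.zpowers (gen2 z) ⊔ Subgroup.zpowers (gen3 z)) := by
  have hset : ({![1, z ^ 3, (z ^ 3)⁻¹, 1, 1, 1],
      ![1, 1, z ^ 3, z, z, (z ^ 2)⁻¹],
      ![1, 1, 1, 1, z ^ 3, (z ^ 3)⁻¹]} : Set (Fin 6 → ℂˣ)) =
      {gen1 z} ∪ ({gen2 z} ∪ {gen3 z}) := by
    rw [gen1, gen2, gen3, Set.insert_eq, Set.insert_eq]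
  rw [Gsub, hset, Subgroup.closure_union, Subgroup.closure_union,
    ← Subgroup.zpowers_eq_closure, ← Subgroup.zpowers_eq_closure, ← Subgroup.zpowers_eq_closure]

lemma mem_Gsub_iff (z : ℂˣ) (g : Fin 6 → ℂˣ) :
    g ∈ Gsub z ↔ ∃ i j k : ℤ, gen1 z ^ i * (gen2 z ^ j * gen3 z ^ k) = g := by
  rw [Gsub_eq_sup, Subgroup.mem_sup]
  constructor
  · rintro ⟨x, ⟨i, rfl⟩, y, hy, rfl⟩
    rw [Subgroup.mem_sup] at hy
    obtain ⟨x2, ⟨j, rfl⟩, x3, ⟨k, rfl⟩, rfl⟩ := hy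
    exact ⟨i, j, k, rfl⟩
  · rintro ⟨i, j, k, rfl⟩
    exact ⟨_, ⟨i, rfl⟩, _, Subgroup.mem_sup.mpr ⟨_, ⟨j, rfl⟩, _, ⟨k, rfl⟩, rfl⟩, rfl⟩

lemma z9 (z : ℂˣ) (hz : IsPrimitiveRoot (z : ℂ) 9) : z ^ 9 = 1 := by
  ext; push_cast; exact hz.pow_eq_one

lemma zz3 (z : ℂˣ) (hz : IsPrimitiveRoot (z : ℂ) 9) : (z ^ 3) ^ 3 = 1 := by
  have h : (z ^ 3) ^ 3 = z ^ 9 := by rw [← pow_mul]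
  rw [h, z9 z hz]

lemma gen1_pow (z : ℂˣ) (hz : IsPrimitiveRoot (z : ℂ) 9) : gen1 z ^ 3 = 1 := by
  have h3 := zz3 z hz
  funext m
  fin_cases m
  · show (1 : ℂˣ) ^ 3 = 1; simp
  · show (z ^ 3) ^ 3 = 1; exact h3
  · show ((z ^ 3)⁻¹) ^ 3 = 1; rw [inv_pow, h3, inv_one]
  · show (1 : ℂˣ) ^ 3 = 1; simp
  · show (1 : ℂˣ) ^ 3 = 1; simp
  · show (1 : ℂˣ) ^ 3 = 1; simp

lemma gen2_pow (z : ℂˣ) (hz : IsPrimitiveRoot (z : ℂ) 9) : gen2 z ^ 9 = 1 := by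
  have h9 := z9 z hz
  funext m
  fin_cases m
  · show (1 : ℂˣ) ^ 9 = 1; simp
  · show (1 : ℂˣ) ^ 9 = 1; simp
  · show (z ^ 3) ^ 9 = 1; rw [← pow_mul, show 3 * 9 = 9 * 3 from rfl, pow_mul, h9, one_pow]
  · show z ^ 9 = 1; exact h9
  · show z ^ 9 = 1; exact h9
  · show ((z ^ 2)⁻¹) ^ 9 = 1
    rw [inv_pow, ← pow_mul, show 2 * 9 = 9 * 2 from rfl, pow_mul, h9, one_pow, inv_one]

lemma gen3_pow (z : ℂˣ) (hz : IsPrimitiveRoot (z : ℂ) 9) : gen3 z ^ 3 = 1 := by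
  have h3 := zz3 z hz
  funext m
  fin_cases m
  · show (1 : ℂˣ) ^ 3 = 1; simp
  · show (1 : ℂˣ) ^ 3 = 1; simp
  · show (1 : ℂˣ) ^ 3 = 1; simp
  · show (1 : ℂˣ) ^ 3 = 1; simp
  · show (z ^ 3) ^ 3 = 1; exact h3
  · show ((z ^ 3)⁻¹) ^ 3 = 1; rw [inv_pow, h3, inv_one]

lemma zpow_reduce {G : Type*} [Group G] (a : G) (n : ℕ) (hn : 0 < n) (h : a ^ n = 1) (i : ℤ) :
    ∃ m : ℕ, m < n ∧ a ^ i = a ^ m := by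
  have hn' : (0:ℤ) < n := by exact_mod_cast hn
  refine ⟨(i % n).toNat, ?_, ?_⟩
  · have h1 : i % n < n := Int.emod_lt_of_pos i hn'
    have h0 : (0:ℤ) ≤ i % n := Int.emod_nonneg i (by omega)
    omega
  · have h0 : (0:ℤ) ≤ i % n := Int.emod_nonneg i (by omega)
    have he : a ^ i = a ^ ((n:ℤ) * (i / n) + i % n) := by rw [Int.mul_ediv_add_emod]
    rw [he, zpow_add, zpow_mul, zpow_natCast, h, one_zpow, one_mul,
      ← zpow_natCast, Int.toNat_of_nonneg h0]

def prodFun (z : ℂˣ) (t : ℕ × ℕ × ℕ) : Fin 6 → ℂˣ :=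
  gen1 z ^ t.1 * (gen2 z ^ t.2.1 * gen3 z ^ t.2.2)

def theBox : Finset (ℕ × ℕ × ℕ) := Finset.range 3 ×ˢ Finset.range 9 ×ˢ Finset.range 3

lemma Gsub_eq_image (z : ℂˣ) (hz : IsPrimitiveRoot (z : ℂ) 9) :
    (Gsub z : Set (Fin 6 → ℂˣ)) = prodFun z '' ↑theBox := by
  ext g
  simp only [SetLike.mem_coe, mem_Gsub_iff, Set.mem_image, Finset.mem_coe, theBox,
    Finset.mem_product, Finset.mem_range]
  constructor
  · rintro ⟨i, j, k, rfl⟩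
    obtain ⟨m1, hm1, e1⟩ := zpow_reduce (gen1 z) 3 (by norm_num) (gen1_pow z hz) i
    obtain ⟨m2, hm2, e2⟩ := zpow_reduce (gen2 z) 9 (by norm_num) (gen2_pow z hz) j
    obtain ⟨m3, hm3, e3⟩ := zpow_reduce (gen3 z) 3 (by norm_num) (gen3_pow z hz) k
    exact ⟨(m1, m2, m3), ⟨hm1, hm2, hm3⟩, by rw [prodFun, ← e1, ← e2, ← e3]⟩
  · rintro ⟨⟨m1, m2, m3⟩, _, rfl⟩
    exact ⟨m1, m2, m3, by rw [prodFun]; push_cast [zpow_natCast]; rfl⟩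

lemma inj_box (z : ℂˣ) (hz : IsPrimitiveRoot (z : ℂ) 9) :
    Set.InjOn (prodFun z) ↑theBox := by
  rintro ⟨i, j, k⟩ hm ⟨i', j', k'⟩ hm' heq
  simp only [theBox, Finset.mem_coe, Finset.mem_product, Finset.mem_range] at hm hm'
  obtain ⟨hi, hj, hk⟩ := hm
  obtain ⟨hi', hj', hk'⟩ := hm'
  have h3 : (1:ℂˣ)^i * (z^j * (1:ℂˣ)^k) = (1:ℂˣ)^i' * (z^j' * (1:ℂˣ)^k') := congrFun heq 3
  simp only [one_pow, one_mul, mul_one] at h3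
  have hjj : j = j' := by
    have hc := congrArg Units.val h3
    push_cast at hc
    exact hz.pow_inj hj hj' hc
  have h1 : (z^3)^i * ((1:ℂˣ)^j * (1:ℂˣ)^k) = (z^3)^i' * ((1:ℂˣ)^j' * (1:ℂˣ)^k') :=
    congrFun heq 1
  simp only [one_pow, one_mul, mul_one, ← pow_mul] at h1
  have hii : i = i' := by
    have hc := congrArg Units.val h1
    push_cast at hc
    have := hz.pow_inj (by omega) (by omega) hc
    omega
  have h4 : (1:ℂˣ)^i * (z^j * (z^3)^k) = (1:ℂˣ)^i' * (z^j' * (z^3)^k') := congrFun heq 4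
  simp only [one_pow, one_mul, mul_one, ← pow_mul] at h4
  rw [hjj] at h4
  have h4' : (z:ℂˣ)^(3*k) = z^(3*k') := mul_left_cancel h4
  have hkk : k = k' := by
    have hc := congrArg Units.val h4'
    push_cast at hc
    have := hz.pow_inj (by omega) (by omega) hc
    omega
  simp [hii, hjj, hkk]

lemma ncard_Gsub (z : ℂˣ) (hz : IsPrimitiveRoot (z : ℂ) 9) :
    (Gsub z : Set (Fin 6 → ℂˣ)).ncard = 81 := by
  rw [Gsub_eq_image z hz, Set.ncard_image_of_injOn (inj_box z hz), Set.ncard_coe_finset]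
  rfl

theorem stmt_5 (z : ℂˣ) (hz : IsPrimitiveRoot (z : ℂ) 9) :
    ∃ S : Finset ℂ, (0 : ℂ) ∈ S ∧ ∀ l : ℂ, l ∉ S →
      ∀ a b c p : ℂ, c ≠ 0 → lineEqs l a b c p →
        ({w : Submodule ℂ (Fin 6 → ℂ) |
            ∃ g ∈ Gsub z, Submodule.map (diagMap g) (linePlane a b c p) = w}.ncard = 81 ∧
          ∀ g ∈ Gsub z,
            Submodule.map (diagMap g) (linePlane a b c p) = linePlane a b c p → g = 1) := by
  refine ⟨{0}, Finset.mem_singleton_self 0, ?_⟩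
  intro l hl a b c p hc hline
  have hl0 : l ≠ 0 := by
    intro h; exact hl (by simp [h])
  obtain ⟨h1, h2, h3, h4⟩ := hline
  have ha : a ≠ 0 := by
    intro ha0
    have hc3 : 2 * c ^ 3 + 1 = 0 := by
      have hz0 : (2 * c ^ 3 + 1) * l = 0 := by rw [← h3, ha0]; ring
      rcases mul_eq_zero.mp hz0 with h | h
      · exact h
      · exact absurd h hl0
    have h9 : (9:ℂ) * l ^ 6 = 0 := by
      linear_combination h4 - (32 * c ^ 3 - 8 * l ^ 6) * hc3
    have hl6 : l ^ 6 = 0 := by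
      rcases mul_eq_zero.mp h9 with h | h
      · norm_num at h
      · exact h
    exact hl0 ((pow_eq_zero_iff (show (6:ℕ) ≠ 0 by norm_num)).mp hl6)
  have hp : p ≠ 0 := by
    intro hp0
    apply ha
    have : (-2 : ℂ) * a = 0 := by rw [← h1, hp0]; ring
    rcases mul_eq_zero.mp this with h | h
    · norm_num at h
    · exact h
  have hb : b ≠ 0 := by
    intro hb0
    have : (4:ℂ) * a * c = 0 := by rw [← h2, hb0]; ring
    rcases mul_eq_zero.mp this with h | h
    · rcases mul_eq_zero.mp h with h' | h'
      · norm_num at h'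
      · exact ha h'
    · exact hc h
  have hstab : ∀ g ∈ Gsub z,
      Submodule.map (diagMap g) (linePlane a b c p) = linePlane a b c p → g = 1 :=
    fun g hg hW => stab_trivial z ha hb hp hg hW
  refine ⟨?_, hstab⟩
  have hset : {w : Submodule ℂ (Fin 6 → ℂ) |
      ∃ g ∈ Gsub z, Submodule.map (diagMap g) (linePlane a b c p) = w} =
      (fun g : Fin 6 → ℂˣ => Submodule.map (diagMap g) (linePlane a b c p)) ''
        (Gsub z : Set (Fin 6 → ℂˣ)) := by
    ext w
    simp [Set.mem_image, eq_comm]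
  rw [hset]
  have hinj : Set.InjOn
      (fun g : Fin 6 → ℂˣ => Submodule.map (diagMap g) (linePlane a b c p))
      (Gsub z : Set (Fin 6 → ℂˣ)) := by
    intro g hg h hh hgh
    simp only [SetLike.mem_coe] at hg hh
    have hgh' : Submodule.map (diagMap g) (linePlane a b c p) =
        Submodule.map (diagMap h) (linePlane a b c p) := hgh
    have key : Submodule.map (diagMap (g⁻¹ * h)) (linePlane a b c p) = linePlane a b c p := by
      calc Submodule.map (diagMap (g⁻¹ * h)) (linePlane a b c p)
          = Submodule.map (diagMap g⁻¹) (Submodule.map (diagMap h) (linePlane a b c p)) := by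
            rw [diagMap_mul, Submodule.map_comp]
        _ = Submodule.map (diagMap g⁻¹) (Submodule.map (diagMap g) (linePlane a b c p)) := by
            rw [← hgh']
        _ = Submodule.map (diagMap (g⁻¹ * g)) (linePlane a b c p) := by
            rw [diagMap_mul, Submodule.map_comp]
        _ = linePlane a b c p := by rw [inv_mul_cancel, diagMap_one, Submodule.map_id]
    have := hstab (g⁻¹ * h) (mul_mem (inv_mem hg) hh) key
    exact inv_mul_eq_one.mp this
  rw [Set.ncard_image_of_injOn hinj]
  exact ncard_Gsub z hz
end
end

section
/- There exists a finite set S ⊂ ℂ containing 0 such that for every λ ∉ S and every (a,b,c,p) ∈ ℂ⁴ with c ≠ 0 satisfying λp² = −2a, λ²b = 4ac, 12ca³ = (2c³+1)λ, and 64c⁶ − (16λ⁶ − 32)c³ + λ⁶ = 0, the orbit of the plane W(a,b,c,p) under the coordinate-permutation action of H on subspaces of ℂ⁶ has exactly 18 elements; equivalently, the stabilizer of W(a,b,c,p) in H is the two-element subgroup generated by the permutation swapping x₀ ↔ x₁ and x₃ ↔ x₄. -/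
/-!
Write `u = (1,-1,0,p,-p,0)` and `v = (a,a,b,c,c,1)`, and let `σ ∈ H` stabilize `W = ⟨u, v⟩`.
Then `u ∘ σ = α u + β v`; since `σ` permutes the coordinates `3, 4, 5`, these sum to `0` on
`u ∘ σ` and to `β (2c + 1)` on the right, so `β = 0` once `2c + 1 ≠ 0`. Up to the block scaling
by `(1,1,1,p,p,p)`, `u` is the sign pattern `(1,-1,0,1,-1,0)`, and a finite check shows that the
only block permutations fixing this pattern up to a scalar are `1` and `(0 1)(3 4)`; the latter
maps `u ↦ -u` and fixes `v`. The equations force `p ≠ 0` unless `λ = 0`, and `2c + 1 ≠ 0`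
unless `λ⁶ = 1`, so outside these `λ` the stabilizer has order `2` and, as `|H| = 36`, the
orbit has `18` elements.
-/

noncomputable section

open Equiv Submodule Finset

theorem Equiv.Perm.pred_apply_iff_of_eq_of_not_pred {α : Type*} {p : α → Prop} {σ : Perm α}
    (h : ∀ i, ¬ p i → σ i = i) (i : α) : p (σ i) ↔ p i := by
  constructor
  · intro hσi
    by_contra hi
    rw [h i hi] at hσi
    exact hi hσi
  · intro hi
    by_contra hσi
    rw [σ.injective (h _ hσi)] at hσi
    exact hσi hi

def blockSubgroup : Subgroup (Perm (Fin 6)) where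
  carrier := {σ | ∀ i, (σ i : ℕ) < 3 ↔ (i : ℕ) < 3}
  one_mem' _ := Iff.rfl
  mul_mem' hσ hτ i := (hσ _).trans (hτ i)
  inv_mem' {σ} hσ i := by simpa using (hσ (σ⁻¹ i)).symm

theorem mem_blockSubgroup {σ : Perm (Fin 6)} :
    σ ∈ blockSubgroup ↔ ∀ i, (σ i : ℕ) < 3 ↔ (i : ℕ) < 3 :=
  Iff.rfl

instance : DecidablePred (· ∈ blockSubgroup) := fun _ => decidable_of_iff' _ mem_blockSubgroup

theorem Hsub_le_blockSubgroup : Hsub ≤ blockSubgroup := by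
  rw [Hsub, Subgroup.closure_le]
  rintro σ (hσ | hσ) i
  · exact Perm.pred_apply_iff_of_eq_of_not_pred (p := fun i : Fin 6 => (i : ℕ) < 3)
      (fun i hi => hσ i (not_lt.mp hi)) i
  · exact not_iff_not.mp <| Perm.pred_apply_iff_of_eq_of_not_pred
      (p := fun i : Fin 6 => ¬ (i : ℕ) < 3) (fun i hi => hσ i (not_not.mp hi)) i

theorem blockSubgroup_le_Hsub : blockSubgroup ≤ Hsub := by
  intro σ hσ
  have hσ' : ∀ i, ¬ (σ i : ℕ) < 3 ↔ ¬ (i : ℕ) < 3 := fun i => not_congr (hσ i)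
  set σlow := Perm.ofSubtype (σ.subtypePerm (p := fun i : Fin 6 => (i : ℕ) < 3) hσ)
  set σhigh := Perm.ofSubtype (σ.subtypePerm (p := fun i : Fin 6 => ¬ (i : ℕ) < 3) hσ')
  have hsplit : σ = σlow * σhigh := by
    ext i
    by_cases hi : (i : ℕ) < 3
    · rw [Perm.mul_apply, Perm.ofSubtype_subtypePerm_of_not_mem
        (p := fun i : Fin 6 => ¬ (i : ℕ) < 3) hσ' (not_not.mpr hi),
        Perm.ofSubtype_subtypePerm_of_mem (p := fun i : Fin 6 => (i : ℕ) < 3) hσ hi]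
    · rw [Perm.mul_apply, Perm.ofSubtype_subtypePerm_of_mem
        (p := fun i : Fin 6 => ¬ (i : ℕ) < 3) hσ' hi,
        Perm.ofSubtype_subtypePerm_of_not_mem (p := fun i : Fin 6 => (i : ℕ) < 3) hσ
        (mt (hσ i).mp hi)]
  rw [hsplit]
  refine mul_mem (Subgroup.subset_closure (Or.inl fun i hi => ?_))
    (Subgroup.subset_closure (Or.inr fun i hi => ?_))
  · exact Perm.ofSubtype_apply_of_not_mem _ (not_lt.mpr hi)
  · exact Perm.ofSubtype_apply_of_not_mem _ (not_not.mpr hi)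

theorem Hsub_eq_blockSubgroup : Hsub = blockSubgroup :=
  le_antisymm Hsub_le_blockSubgroup blockSubgroup_le_Hsub

set_option maxRecDepth 10000 in
theorem card_Hsub : Nat.card Hsub = 36 := by
  rw [Hsub_eq_blockSubgroup, Nat.card_eq_fintype_card]
  decide

def swapPair : Perm (Fin 6) := swap 0 1 * swap 3 4

theorem swapPair_mul_self : swapPair * swapPair = 1 := by decide

theorem swapPair_inv : swapPair⁻¹ = swapPair := inv_eq_of_mul_eq_one_right swapPair_mul_self

def signPattern : Fin 6 → ℤ := ![1, -1, 0, 1, -1, 0]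

set_option maxRecDepth 10000 in
theorem eq_one_or_eq_swapPair_of_signPattern_comp {σ : Perm (Fin 6)} (hσ : σ ∈ blockSubgroup)
    (h : signPattern ∘ σ = signPattern (σ 0) • signPattern) :
    σ = 1 ∨ σ = swapPair := by
  revert σ
  decide

theorem permMap_apply (σ : Perm (Fin 6)) (x : Fin 6 → ℂ) : permMap σ x = x ∘ σ := rfl

theorem permMap_one : permMap 1 = LinearMap.id := rfl

theorem permMap_comp (σ τ : Perm (Fin 6)) : permMap σ ∘ₗ permMap τ = permMap (τ * σ) := rfl

/-- `x ↦ x ∘ σ` is a right action, so `σ` acts on subspaces through `σ⁻¹`. -/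
instance : MulAction (Perm (Fin 6)) (Submodule ℂ (Fin 6 → ℂ)) where
  smul σ W := W.map (permMap σ⁻¹)
  one_smul W := by
    change W.map (permMap 1⁻¹) = W
    rw [inv_one, permMap_one, map_id]
  mul_smul σ τ W := by
    change W.map (permMap (σ * τ)⁻¹) = (W.map (permMap τ⁻¹)).map (permMap σ⁻¹)
    rw [← map_comp, permMap_comp, mul_inv_rev]

theorem perm_smul_submodule_def (σ : Perm (Fin 6)) (W : Submodule ℂ (Fin 6 → ℂ)) :
    σ • W = W.map (permMap σ⁻¹) :=
  rfl

theorem orbit_eq_setOf_map_permMap (H : Subgroup (Perm (Fin 6))) (W : Submodule ℂ (Fin 6 → ℂ)) :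
    MulAction.orbit H W = {w | ∃ σ ∈ H, W.map (permMap σ) = w} := by
  ext w
  constructor
  · rintro ⟨σ, rfl⟩
    exact ⟨(σ : Perm (Fin 6))⁻¹, inv_mem σ.2, rfl⟩
  · rintro ⟨σ, hσ, rfl⟩
    refine ⟨⟨σ, hσ⟩⁻¹, ?_⟩
    change W.map (permMap σ⁻¹⁻¹) = _
    rw [inv_inv]

section Plane

variable {a b c p : ℂ}

def planeU (p : ℂ) : Fin 6 → ℂ := ![1, -1, 0, p, -p, 0]

def planeV (a b c : ℂ) : Fin 6 → ℂ := ![a, a, b, c, c, 1]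

theorem linePlane_eq_span : linePlane a b c p = span ℂ {planeU p, planeV a b c} := rfl

def blockScale (p : ℂ) (i : Fin 6) : ℂ := if (i : ℕ) < 3 then 1 else p

theorem blockScale_apply {σ : Perm (Fin 6)} (hσ : σ ∈ blockSubgroup) (i : Fin 6) :
    blockScale p (σ i) = blockScale p i := by
  simp only [blockScale, hσ i]

theorem blockScale_ne_zero (hp : p ≠ 0) (i : Fin 6) : blockScale p i ≠ 0 := by
  unfold blockScale
  split_ifs <;> simp [hp]

theorem planeU_eq_blockScale_mul (i : Fin 6) : planeU p i = blockScale p i * signPattern i := by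
  fin_cases i <;> simp [planeU, blockScale, signPattern]

theorem planeU_comp_swapPair : planeU p ∘ swapPair = -planeU p := by
  funext i
  fin_cases i <;> simp [planeU, swapPair, swap_apply_of_ne_of_ne]

theorem planeV_comp_swapPair : planeV a b c ∘ swapPair = planeV a b c := by
  funext i
  fin_cases i <;> simp [planeV, swapPair, swap_apply_of_ne_of_ne]

theorem map_linePlane_swapPair :
    (linePlane a b c p).map (permMap swapPair) = linePlane a b c p := by
  have hle : (linePlane a b c p).map (permMap swapPair) ≤ linePlane a b c p := by
    rw [linePlane_eq_span, map_span, Set.image_pair, span_le, Set.insert_subset_iff,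
      Set.singleton_subset_iff, permMap_apply, permMap_apply, planeU_comp_swapPair,
      planeV_comp_swapPair]
    exact ⟨neg_mem (subset_span (by simp)), subset_span (by simp)⟩
  refine le_antisymm hle ?_
  calc linePlane a b c p
      = ((linePlane a b c p).map (permMap swapPair)).map (permMap swapPair) := by
        rw [← map_comp, permMap_comp, swapPair_mul_self, permMap_one, map_id]
    _ ≤ (linePlane a b c p).map (permMap swapPair) := map_mono hle

def highBlock : Finset (Fin 6) := univ.filter fun i => ¬ (i : ℕ) < 3

theorem sum_highBlock_planeU_comp {σ : Perm (Fin 6)} (hσ : σ ∈ blockSubgroup) :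
    ∑ i ∈ highBlock, planeU p (σ i) = 0 := by
  rw [Finset.sum_equiv σ (s := highBlock) (t := highBlock)
    (fun i => by simp only [highBlock, mem_filter, mem_univ, true_and, hσ i]) (fun _ _ => rfl)]
  simp [highBlock, Finset.sum_filter, Fin.sum_univ_six, planeU]

theorem eq_one_or_eq_swapPair_of_map_linePlane (hp : p ≠ 0) (hc : 2 * c + 1 ≠ 0)
    {σ : Perm (Fin 6)} (hσ : σ ∈ blockSubgroup)
    (h : (linePlane a b c p).map (permMap σ) = linePlane a b c p) :
    σ = 1 ∨ σ = swapPair := by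
  have hu : permMap σ (planeU p) ∈ span ℂ {planeU p, planeV a b c} := by
    rw [← linePlane_eq_span, ← h]
    exact mem_map_of_mem (subset_span (Set.mem_insert _ _))
  obtain ⟨α, β, hαβ⟩ := mem_span_pair.mp hu
  have hcoord (i : Fin 6) : planeU p (σ i) = α * planeU p i + β * planeV a b c i :=
    (congrFun hαβ i).symm
  obtain rfl : β = 0 := by
    have hsum : ∑ i ∈ highBlock, planeU p (σ i) = β * (2 * c + 1) := by
      simp only [hcoord]
      simp [highBlock, Finset.sum_filter, Fin.sum_univ_six, planeU, planeV]
      ring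
    rw [sum_highBlock_planeU_comp hσ] at hsum
    exact (mul_eq_zero.mp hsum.symm).resolve_right hc
  have hsign (i : Fin 6) : (signPattern (σ i) : ℂ) = α * signPattern i := by
    have hi := hcoord i
    rw [zero_mul, add_zero, planeU_eq_blockScale_mul, planeU_eq_blockScale_mul,
      blockScale_apply hσ, mul_left_comm] at hi
    exact mul_left_cancel₀ (blockScale_ne_zero hp i) hi
  have hα : α = signPattern (σ 0) := by simpa [signPattern] using (hsign 0).symm
  refine eq_one_or_eq_swapPair_of_signPattern_comp hσ (funext fun i => ?_)
  have hi : (signPattern (σ i) : ℂ) = (signPattern (σ 0) * signPattern i : ℤ) := by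
    rw [hsign i, hα]
    push_cast
    rfl
  exact_mod_cast hi

theorem map_linePlane_eq_iff (hp : p ≠ 0) (hc : 2 * c + 1 ≠ 0) {σ : Perm (Fin 6)}
    (hσ : σ ∈ blockSubgroup) :
    (linePlane a b c p).map (permMap σ) = linePlane a b c p ↔ σ = 1 ∨ σ = swapPair := by
  refine ⟨eq_one_or_eq_swapPair_of_map_linePlane hp hc hσ, ?_⟩
  rintro (rfl | rfl)
  · rw [permMap_one, map_id]
  · exact map_linePlane_swapPair

theorem mem_stabilizer_linePlane_iff (hp : p ≠ 0) (hc : 2 * c + 1 ≠ 0) (g : Hsub) :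
    g ∈ MulAction.stabilizer Hsub (linePlane a b c p) ↔
      (g : Perm (Fin 6)) = 1 ∨ (g : Perm (Fin 6)) = swapPair := by
  have hg : (g : Perm (Fin 6))⁻¹ ∈ blockSubgroup := Hsub_le_blockSubgroup (inv_mem g.2)
  rw [MulAction.mem_stabilizer_iff, Subgroup.smul_def, perm_smul_submodule_def,
    map_linePlane_eq_iff hp hc hg, inv_eq_one, inv_eq_iff_eq_inv, swapPair_inv]

theorem card_stabilizer_linePlane (hp : p ≠ 0) (hc : 2 * c + 1 ≠ 0) :
    Nat.card (MulAction.stabilizer Hsub (linePlane a b c p)) = 2 := by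
  have hswap : swapPair ∈ Hsub := blockSubgroup_le_Hsub (by decide)
  rw [Nat.card_eq_two_iff]
  refine ⟨1, ⟨⟨swapPair, hswap⟩, (mem_stabilizer_linePlane_iff hp hc _).mpr (Or.inr rfl)⟩,
    fun h => ?_, ?_⟩
  · simp only [Subtype.ext_iff, OneMemClass.coe_one] at h
    exact absurd h (by decide)
  · ext ⟨g, hgW⟩
    simp only [Set.mem_insert_iff, Set.mem_singleton_iff, Set.mem_univ, iff_true, Subtype.ext_iff,
      OneMemClass.coe_one]
    exact (mem_stabilizer_linePlane_iff hp hc g).mp hgW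

theorem ncard_orbit_linePlane (hp : p ≠ 0) (hc : 2 * c + 1 ≠ 0) :
    {w | ∃ σ ∈ Hsub, (linePlane a b c p).map (permMap σ) = w}.ncard = 18 := by
  have h := (MulAction.stabilizer Hsub (linePlane a b c p)).card_mul_index
  rw [card_stabilizer_linePlane hp hc, card_Hsub, MulAction.index_stabilizer,
    orbit_eq_setOf_map_permMap] at h
  omega

end Plane

theorem lineEqs.ne_zero_of_ne_zero {l a b c p : ℂ} (h : lineEqs l a b c p) (hl : l ≠ 0) :
    p ≠ 0 := by
  obtain ⟨e1, -, e3, e4⟩ := h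
  rintro rfl
  obtain rfl : a = 0 := by linear_combination e1 / 2
  have hc3 : (2 * c ^ 3 + 1) * l = 0 := by linear_combination -e3
  have hc3 : c ^ 3 = -1 / 2 := by linear_combination (mul_eq_zero.mp hc3).resolve_right hl / 2
  have hl6 : 9 * l ^ 6 = 0 := by linear_combination e4 - (64 * c ^ 3 - 16 * l ^ 6) * hc3
  exact hl (pow_eq_zero_iff (n := 6) (by norm_num) |>.mp (by linear_combination hl6 / 9))

theorem lineEqs.two_mul_add_one_ne_zero {l a b c p : ℂ} (h : lineEqs l a b c p)
    (hl : l ^ 6 ≠ 1) : 2 * c + 1 ≠ 0 := by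
  intro hc
  obtain rfl : c = -1 / 2 := by linear_combination hc / 2
  exact hl (by linear_combination h.2.2.2 / 3)

theorem stmt_6 :
    ∃ S : Finset ℂ, (0 : ℂ) ∈ S ∧ ∀ l : ℂ, l ∉ S →
      ∀ a b c p : ℂ, c ≠ 0 → lineEqs l a b c p →
        ({w : Submodule ℂ (Fin 6 → ℂ) |
            ∃ σ ∈ Hsub, Submodule.map (permMap σ) (linePlane a b c p) = w}.ncard = 18 ∧
          ∀ σ ∈ Hsub,
            (Submodule.map (permMap σ) (linePlane a b c p) = linePlane a b c p ↔
              σ = 1 ∨ σ = Equiv.swap (0 : Fin 6) 1 * Equiv.swap (3 : Fin 6) 4)) := by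
  refine ⟨insert 0 (Polynomial.nthRootsFinset 6 (1 : ℂ)), mem_insert_self _ _, ?_⟩
  intro l hl a b c p _ h
  have hl0 : l ≠ 0 := by
    rintro rfl
    exact hl (mem_insert_self _ _)
  have hl6 : l ^ 6 ≠ 1 := fun hl6 =>
    hl (mem_insert_of_mem ((Polynomial.mem_nthRootsFinset (by norm_num) _).mpr hl6))
  have hp := h.ne_zero_of_ne_zero hl0
  have hc := h.two_mul_add_one_ne_zero hl6
  exact ⟨ncard_orbit_linePlane hp hc,
    fun σ hσ => map_linePlane_eq_iff hp hc (Hsub_le_blockSubgroup hσ)⟩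
end
end

section
/- There exists a finite set S ⊂ ℂ containing 0 such that for every λ ∉ S and every (a,b,c,p) ∈ ℂ⁴ with c ≠ 0 satisfying λp² = −2a, λ²b = 4ac, 12ca³ = (2c³+1)λ, and 64c⁶ − (16λ⁶ − 32)c³ + λ⁶ = 0, the following holds with W = W(a,b,c,p): every vector B ∈ ℂ⁶ such that the directional derivatives satisfy ∇F_λ(P)·B = 0 and ∇G_λ(P)·B = 0 for all P ∈ W must lie in W. (This is the computation showing the normal bundle of the line W on X_λ is not O(1) ⊕ O(−3).) -/
noncomputable section

/-!
The expressions `∇F_λ(P)·B` and `∇G_λ(P)·B` are quadratic in `P`, so it suffices to test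
`P = u`, `P = v` and, for the cross term, `P = u + v`. Using the line equations, these linear
conditions force `B₀ + B₁ = 2aB₅`, `B₃ − B₄ = p(B₀ − B₁)`, `B₃ + B₄ = 2cB₅` and `B₂ = bB₅`,
i.e. `B = ((B₀ − B₁)/2) u + B₅ v`. Only the step `B₃ + B₄ = 2cB₅` needs more than `λ ≠ 0`: it
comes from a `2 × 2` system whose two equations can both degenerate only when `λ⁶ = 4`.
-/

theorem hasFDerivAt_apply_mul_apply_mul_apply {𝕜 ι : Type*} [NontriviallyNormedField 𝕜]
    [Fintype ι] (i j k : ι) (P : ι → 𝕜) :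
    HasFDerivAt (fun x : ι → 𝕜 => x i * x j * x k)
      ((P j * P k) • ContinuousLinearMap.proj (R := 𝕜) (φ := fun _ => 𝕜) i +
        (P i * P k) • ContinuousLinearMap.proj j + (P i * P j) • ContinuousLinearMap.proj k) P := by
  have h (n : ι) : HasFDerivAt (fun x : ι → 𝕜 => x n) (ContinuousLinearMap.proj (R := 𝕜) n) P :=
    hasFDerivAt_apply n P
  refine (((h i).fun_mul (h j)).fun_mul (h k)).congr_fderiv ?_
  ext B
  simp only [smul_add, add_apply, smul_apply, ContinuousLinearMap.proj_apply, smul_eq_mul]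
  ring

theorem fderiv_Fcubic_apply (l : ℂ) (P B : Fin 6 → ℂ) :
    fderiv ℂ (Fcubic l) P B =
      3 * (P 0 ^ 2 * B 0 + P 1 ^ 2 * B 1 + P 2 ^ 2 * B 2) -
        3 * l * (P 4 * P 5 * B 3 + P 3 * P 5 * B 4 + P 3 * P 4 * B 5) := by
  have hF : Fcubic l = fun x => x 0 * x 0 * x 0 + x 1 * x 1 * x 1 + x 2 * x 2 * x 2 -
      3 * l * (x 3 * x 4 * x 5) := by
    funext x; unfold Fcubic; ring
  have h := hasFDerivAt_apply_mul_apply_mul_apply (𝕜 := ℂ) (P := P)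
  rw [hF, ((((h 0 0 0).fun_add (h 1 1 1)).fun_add (h 2 2 2)).fun_sub
    ((h 3 4 5).const_mul _)).fderiv]
  simp only [Fin.isValue, smul_add, sub_apply, add_apply, smul_apply,
    ContinuousLinearMap.proj_apply, smul_eq_mul]
  ring

theorem fderiv_Gcubic_apply (l : ℂ) (P B : Fin 6 → ℂ) :
    fderiv ℂ (Gcubic l) P B =
      3 * (P 3 ^ 2 * B 3 + P 4 ^ 2 * B 4 + P 5 ^ 2 * B 5) -
        3 * l * (P 1 * P 2 * B 0 + P 0 * P 2 * B 1 + P 0 * P 1 * B 2) := by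
  have hG : Gcubic l = fun x => x 3 * x 3 * x 3 + x 4 * x 4 * x 4 + x 5 * x 5 * x 5 -
      3 * l * (x 0 * x 1 * x 2) := by
    funext x; unfold Gcubic; ring
  have h := hasFDerivAt_apply_mul_apply_mul_apply (𝕜 := ℂ) (P := P)
  rw [hG, ((((h 3 3 3).fun_add (h 4 4 4)).fun_add (h 5 5 5)).fun_sub
    ((h 0 1 2).const_mul _)).fderiv]
  simp only [Fin.isValue, smul_add, sub_apply, add_apply, smul_apply,
    ContinuousLinearMap.proj_apply, smul_eq_mul]
  ring

theorem mem_linePlane_of_coords {a b c p : ℂ} {B : Fin 6 → ℂ} (h01 : B 0 + B 1 = 2 * a * B 5)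
    (h2 : B 2 = b * B 5) (h34 : B 3 + B 4 = 2 * c * B 5) (h34' : B 3 - B 4 = p * (B 0 - B 1)) :
    B ∈ linePlane a b c p := by
  refine Submodule.mem_span_pair.2 ⟨(B 0 - B 1) / 2, B 5, ?_⟩
  funext i
  fin_cases i <;> simp
  · linear_combination -h01 / 2
  · linear_combination -h01 / 2
  · linear_combination -h2
  · linear_combination -(h34 + h34') / 2
  · linear_combination (h34' - h34) / 2

namespace lineEqs

variable {l a b c p : ℂ}

theorem a_ne_zero (h : lineEqs l a b c p) (hl : l ≠ 0) : a ≠ 0 := by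
  rintro rfl
  obtain ⟨-, -, h3, h4⟩ := h
  have hc3 : 2 * c ^ 3 + 1 = 0 :=
    (mul_eq_zero.1 (by linear_combination -h3 : (2 * c ^ 3 + 1) * l = 0)).resolve_right hl
  exact hl (pow_eq_zero_iff (n := 6) (by norm_num) |>.1
    (by linear_combination (h4 - (32 * c ^ 3 - 8 * l ^ 6) * hc3) / 9))

theorem p_ne_zero (h : lineEqs l a b c p) (hl : l ≠ 0) : p ≠ 0 := by
  rintro rfl
  exact h.a_ne_zero hl (by linear_combination h.1 / 2)

theorem two_mul_cube_add_cube (h : lineEqs l a b c p) (hl : l ≠ 0) (hc : c ≠ 0) :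
    2 * a ^ 3 + b ^ 3 = 3 * l * c ^ 2 := by
  obtain ⟨-, h2, h3, h4⟩ := h
  have hne : 12 * c * l ^ 6 ≠ 0 := by simp [hc, hl]
  refine mul_left_cancel₀ hne ?_
  linear_combination (12 * c * (l ^ 4 * b ^ 2 + 4 * a * c * l ^ 2 * b + 16 * a ^ 2 * c ^ 2)) * h2 +
    (2 * l ^ 6 + 64 * c ^ 3) * h3 + 2 * l * h4

theorem two_mul_mul_sq_ne_of_eq (h : lineEqs l a b c p) (hl : l ≠ 0) (hl6 : l ^ 6 ≠ 4) (hc : c ≠ 0)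
    (hdeg : l * c ^ 2 = 2 * a ^ 3) : 2 * a * b ^ 2 ≠ l ^ 3 * c := by
  intro h'
  obtain ⟨-, h2, h3, -⟩ := h
  have e1 : l * (4 * c ^ 3 - 1) = 0 := by linear_combination h3 + 6 * c * hdeg
  have e2 : l * c * (16 * c ^ 3 - l ^ 6) = 0 := by
    linear_combination l ^ 4 * h' - 2 * a * (l ^ 2 * b + 4 * a * c) * h2 + 16 * c ^ 2 * hdeg
  have e3 : c * l ^ 2 * (l ^ 6 - 4) = 0 := by linear_combination -l * e2 + 4 * c * l * e1
  exact hl6 (sub_eq_zero.1 ((mul_eq_zero.1 e3).resolve_left (by simp [hc, hl])))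

theorem eq_two_mul_of_linear_system (h : lineEqs l a b c p) (hl : l ≠ 0) (hl6 : l ^ 6 ≠ 4)
    (hc : c ≠ 0) {x y : ℂ}
    (hx₁ : (2 * a * b ^ 2 - l ^ 3 * c) * x = l ^ 2 * (l * c ^ 2 - 2 * a ^ 3) * y)
    (hx₂ : 3 * l * (l * c ^ 2 - 2 * a ^ 3) * x = l ^ 2 * (4 * c ^ 3 - 1) * y) : x = 2 * c * y := by
  rw [← sub_eq_zero]
  by_cases hdeg : l * c ^ 2 = 2 * a ^ 3
  · have hne : 2 * a * b ^ 2 - l ^ 3 * c ≠ 0 :=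
      sub_ne_zero.2 (h.two_mul_mul_sq_ne_of_eq hl hl6 hc hdeg)
    refine (mul_eq_zero.1 ?_).resolve_left hne
    linear_combination hx₁ + y * b ^ 2 * h.2.1 - y * l ^ 2 * h.two_mul_cube_add_cube hl hc
  · have hne : 3 * l * (l * c ^ 2 - 2 * a ^ 3) ≠ 0 :=
      mul_ne_zero (mul_ne_zero three_ne_zero hl) (sub_ne_zero.2 hdeg)
    refine (mul_eq_zero.1 ?_).resolve_left hne
    linear_combination hx₂ + l * y * h.2.2.1

end lineEqs

theorem mem_linePlane_of_fderiv_eq_zero {l a b c p : ℂ} (h : lineEqs l a b c p) (hl : l ≠ 0)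
    (hl6 : l ^ 6 ≠ 4) (hc : c ≠ 0) {B : Fin 6 → ℂ}
    (hB : ∀ P ∈ linePlane a b c p, fderiv ℂ (Fcubic l) P B = 0 ∧ fderiv ℂ (Gcubic l) P B = 0) :
    B ∈ linePlane a b c p := by
  have hu : ![1, -1, 0, p, -p, 0] ∈ linePlane a b c p := Submodule.subset_span (by simp)
  have hv : ![a, a, b, c, c, 1] ∈ linePlane a b c p := Submodule.subset_span (by simp)
  obtain ⟨hFu, hGu⟩ := hB _ hu
  obtain ⟨hFv, hGv⟩ := hB _ hv
  have hFuv := (hB _ (add_mem hu hv)).1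
  rw [fderiv_Fcubic_apply] at hFu hFv hFuv
  rw [fderiv_Gcubic_apply] at hGu hGv
  simp only [Pi.add_apply, Matrix.cons_val] at hFu hGu hFv hGv hFuv
  obtain ⟨h1, h2, h3, -⟩ := id h
  have h01 : B 0 + B 1 = 2 * a * B 5 := by linear_combination hFu / 3 - B 5 * h1
  have hl2 : l ^ 2 * B 2 = 2 * a * (B 3 + B 4) := by
    linear_combination (l / 3) * hGu - (B 3 + B 4) * h1
  have h34' : B 3 - B 4 = p * (B 0 - B 1) := by
    refine sub_eq_zero.1 ((mul_eq_zero.1 ?_).resolve_left (mul_ne_zero hl (h.p_ne_zero hl)))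
    linear_combination (hFuv - hFu - hFv) / 3 - (B 0 - B 1) * h1
  -- `∇F(v)·B = 0` and `∇G(v)·B = 0` with `B 0 + B 1` and `B 2` eliminated
  have h34 : B 3 + B 4 = 2 * c * B 5 := by
    refine h.eq_two_mul_of_linear_system hl hl6 hc ?_ ?_
    · linear_combination (l ^ 2 / 3) * hFv - a ^ 2 * l ^ 2 * h01 - b ^ 2 * hl2
    · linear_combination l ^ 2 * hGv + 3 * l ^ 3 * a * b * h01 + 3 * l * a ^ 2 * hl2 +
        2 * B 5 * l * (3 * a ^ 2 * h2 + h3)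
  have hB2 : B 2 = b * B 5 := by
    refine sub_eq_zero.1 ((mul_eq_zero.1 ?_).resolve_left (pow_ne_zero 2 hl))
    linear_combination hl2 + 2 * a * h34 - B 5 * h2
  exact mem_linePlane_of_coords h01 hB2 h34 h34'

theorem stmt_10 :
    ∃ S : Finset ℂ, (0 : ℂ) ∈ S ∧ ∀ l : ℂ, l ∉ S →
      ∀ a b c p : ℂ, c ≠ 0 → lineEqs l a b c p →
        ∀ B : Fin 6 → ℂ,
          (∀ P ∈ linePlane a b c p,
            fderiv ℂ (Fcubic l) P B = 0 ∧ fderiv ℂ (Gcubic l) P B = 0) →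
          B ∈ linePlane a b c p := by
  refine ⟨insert 0 (Polynomial.nthRootsFinset 6 (4 : ℂ)), Finset.mem_insert_self _ _, ?_⟩
  intro l hlS a b c p hc h B hB
  have hl : l ≠ 0 := fun hl => hlS (hl ▸ Finset.mem_insert_self _ _)
  have hl6 : l ^ 6 ≠ 4 := fun hl6 =>
    hlS (Finset.mem_insert_of_mem ((Polynomial.mem_nthRootsFinset (by norm_num) _).2 hl6))
  exact mem_linePlane_of_fderiv_eq_zero h hl hl6 hc hB
end
end
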